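/- Let M ∈ R^{m×n} have rank r and largest singular value σ₁, let Ω ⊆ [m]×[n], and let M̃ ∈ R^{m×n} be any matrix satisfying M̃_{ij} = M_{ij} for all (i,j) ∈ Ω and ‖M̃‖_* ≤ ‖M‖_* (e.g., a minimizer of the nuclear norm subject to agreeing with M on Ω). Then ‖M − M̃‖_F ≤ 2√(r²σ₁² − ‖M_Ω‖_F²), where ‖M_Ω‖_F² = ∑_{(i,j)∈Ω} M_{ij}². -/

import Mathlib

/-- The nuclear norm of a real matrix: `‖A‖_* = trace √(AᵀA)`. -/
noncomputable def nuclearNorm {m n : ℕ} (A : Matrix (Fin m) (Fin n) ℝ) : ℝ :=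
  ((Matrix.posSemidef_conjTranspose_mul_self A).1.eigenvectorUnitary.1 *
    Matrix.diagonal ((RCLike.ofReal : ℝ → ℝ) ∘ (√·) ∘ (Matrix.posSemidef_conjTranspose_mul_self A).1.eigenvalues) *
    (star (Matrix.posSemidef_conjTranspose_mul_self A).1.eigenvectorUnitary : Matrix (Fin n) (Fin n) ℝ)).trace

noncomputable def Matrix.PosSemidef.sqrt {k : ℕ} {S : Matrix (Fin k) (Fin k) ℝ} (hS : S.PosSemidef) :
    Matrix (Fin k) (Fin k) ℝ :=
  hS.1.eigenvectorUnitary.1 *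
    Matrix.diagonal ((RCLike.ofReal : ℝ → ℝ) ∘ (√·) ∘ hS.1.eigenvalues) *
    (star hS.1.eigenvectorUnitary : Matrix (Fin k) (Fin k) ℝ)

lemma Matrix.PosSemidef.posSemidef_sqrt {k : ℕ} {S : Matrix (Fin k) (Fin k) ℝ}
    (hS : S.PosSemidef) : hS.sqrt.PosSemidef := by
  unfold Matrix.PosSemidef.sqrt
  have hD : (Matrix.diagonal ((RCLike.ofReal : ℝ → ℝ) ∘ (√·) ∘ hS.1.eigenvalues)).PosSemidef :=
    Matrix.posSemidef_diagonal_iff.mpr fun i => by simp [Real.sqrt_nonneg]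
  have := hD.mul_mul_conjTranspose_same (hS.1.eigenvectorUnitary.1)
  simpa [Matrix.star_eq_conjTranspose] using this

lemma Matrix.PosSemidef.sqrt_mul_self {k : ℕ} {S : Matrix (Fin k) (Fin k) ℝ}
    (hS : S.PosSemidef) : hS.sqrt * hS.sqrt = S := by
  unfold Matrix.PosSemidef.sqrt
  conv_rhs => rw [hS.1.spectral_theorem, Unitary.conjStarAlgAut_apply]
  have hU : (star hS.1.eigenvectorUnitary : Matrix (Fin k) (Fin k) ℝ) * hS.1.eigenvectorUnitary.1 = 1 :=
    Unitary.coe_star_mul_self _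
  have hDD : Matrix.diagonal ((RCLike.ofReal : ℝ → ℝ) ∘ (√·) ∘ hS.1.eigenvalues) *
      Matrix.diagonal ((RCLike.ofReal : ℝ → ℝ) ∘ (√·) ∘ hS.1.eigenvalues) =
      Matrix.diagonal ((RCLike.ofReal : ℝ → ℝ) ∘ hS.1.eigenvalues) := by
    rw [Matrix.diagonal_mul_diagonal]
    congr 1; funext i
    simp [Real.mul_self_sqrt (hS.eigenvalues_nonneg i)]
  calc _ = hS.1.eigenvectorUnitary.1 *
        (Matrix.diagonal ((RCLike.ofReal : ℝ → ℝ) ∘ (√·) ∘ hS.1.eigenvalues) *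
        ((star hS.1.eigenvectorUnitary : Matrix (Fin k) (Fin k) ℝ) * hS.1.eigenvectorUnitary.1) *
        Matrix.diagonal ((RCLike.ofReal : ℝ → ℝ) ∘ (√·) ∘ hS.1.eigenvalues)) *
        (star hS.1.eigenvectorUnitary : Matrix (Fin k) (Fin k) ℝ) := by
          simp only [Matrix.mul_assoc]
    _ = _ := by rw [hU, Matrix.mul_one, hDD]

lemma psd_entry_sq_le {k : ℕ} (S : Matrix (Fin k) (Fin k) ℝ) (hS : S.PosSemidef)
    (i j : Fin k) : (S i j) ^ 2 ≤ S i i * S j j := by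
  have hR := hS.posSemidef_sqrt
  have hRR : hS.sqrt * hS.sqrt = S := hS.sqrt_mul_self
  have hsym : ∀ a b, hS.sqrt a b = hS.sqrt b a := by
    intro a b
    have := congrFun (congrFun hR.1 a) b
    simpa [Matrix.conjTranspose_apply] using this.symm
  have hentry : ∀ a b, S a b = ∑ t, hS.sqrt a t * hS.sqrt b t := by
    intro a b
    conv_lhs => rw [← hRR]
    rw [Matrix.mul_apply]
    exact Finset.sum_congr rfl fun t _ => by rw [hsym t b]
  rw [hentry i j, hentry i i, hentry j j]
  have h := Finset.sum_mul_sq_le_sq_mul_sq Finset.univ (fun t => hS.sqrt i t)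
    (fun t => hS.sqrt j t)
  calc (∑ t, hS.sqrt i t * hS.sqrt j t) ^ 2
      ≤ (∑ t, hS.sqrt i t ^ 2) * ∑ t, hS.sqrt j t ^ 2 := h
    _ = (∑ t, hS.sqrt i t * hS.sqrt i t) * ∑ t, hS.sqrt j t * hS.sqrt j t := by
        simp [sq]

lemma psd_diag_nonneg {k : ℕ} (S : Matrix (Fin k) (Fin k) ℝ) (hS : S.PosSemidef)
    (i : Fin k) : 0 ≤ S i i := by
  have hRR : hS.sqrt * hS.sqrt = S := hS.sqrt_mul_self
  have hsym : ∀ a b, hS.sqrt a b = hS.sqrt b a := by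
    intro a b
    have := congrFun (congrFun hS.posSemidef_sqrt.1 a) b
    simpa [Matrix.conjTranspose_apply] using this.symm
  have hentry : S i i = ∑ t, hS.sqrt i t * hS.sqrt i t := by
    conv_lhs => rw [← hRR]
    rw [Matrix.mul_apply]
    exact Finset.sum_congr rfl fun t _ => by rw [hsym t i]
  rw [hentry]
  exact Finset.sum_nonneg fun t _ => mul_self_nonneg _

lemma nuclearNorm_nonneg {m n : ℕ} (A : Matrix (Fin m) (Fin n) ℝ) :
    0 ≤ nuclearNorm A := by
  have hS := (Matrix.posSemidef_conjTranspose_mul_self A).posSemidef_sqrt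
  unfold nuclearNorm
  unfold Matrix.trace
  exact Finset.sum_nonneg fun i _ => psd_diag_nonneg _ hS i

lemma frob_le_nuc_sq {m n : ℕ} (A : Matrix (Fin m) (Fin n) ℝ) :
    ∑ i, ∑ j, (A i j) ^ 2 ≤ (nuclearNorm A) ^ 2 := by
  have hP := Matrix.posSemidef_conjTranspose_mul_self A
  set S := hP.sqrt with hSdef
  have hS : S.PosSemidef := hP.posSemidef_sqrt
  have hSS : S * S = A.conjTranspose * A := hP.sqrt_mul_self
  have hsym : ∀ a b, S a b = S b a := by
    intro a b
    have := congrFun (congrFun hS.1 a) b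
    simpa [Matrix.conjTranspose_apply] using this.symm
  have h1 : ∑ i, ∑ j, (A i j) ^ 2 = (A.conjTranspose * A).trace := by
    rw [Matrix.trace]
    rw [Finset.sum_comm]
    apply Finset.sum_congr rfl
    intro j _
    simp [Matrix.mul_apply, Matrix.conjTranspose_apply, sq, Matrix.diag_apply]
  have h2 : (A.conjTranspose * A).trace = ∑ i, ∑ j, (S i j) ^ 2 := by
    rw [← hSS, Matrix.trace]
    apply Finset.sum_congr rfl
    intro i _
    simp only [Matrix.diag_apply, Matrix.mul_apply, sq]
    exact Finset.sum_congr rfl fun j _ => by rw [hsym j i]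
  have h3 : ∑ i, ∑ j, (S i j) ^ 2 ≤ (∑ i, S i i) ^ 2 := by
    rw [sq, Finset.sum_mul_sum]
    apply Finset.sum_le_sum
    intro i _
    apply Finset.sum_le_sum
    intro j _
    exact psd_entry_sq_le S hS i j
  have h4 : nuclearNorm A = ∑ i, S i i := rfl
  rw [h1, h2, h4]
  exact h3

set_option maxHeartbeats 1000000 in
/-- if `M` has rank `r`, singular values `σ` (largest `σ₁`) with
`‖M‖_F² = ∑ σ k ^ 2` and `‖M‖_* = ∑ σ k`, and `M̃` agrees with `M` on `Ω` and
satisfies `‖M̃‖_* ≤ ‖M‖_*`, then `‖M − M̃‖_F ≤ 2 √(r²σ₁² − ‖M_Ω‖_F²)`. -/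
theorem nnm_recovery_bound (m n r : ℕ) (M Mt : Matrix (Fin m) (Fin n) ℝ)
    (hrank : M.rank = r) (σ : Fin r → ℝ) (hσpos : ∀ k, 0 < σ k) (hanti : Antitone σ)
    (σ₁ : ℝ) (hσ₁ : ∀ k, σ k ≤ σ₁) (hmem : ∃ k, σ k = σ₁)
    (hF : ∑ i, ∑ j, (M i j) ^ 2 = ∑ k, (σ k) ^ 2)
    (hnuc : nuclearNorm M = ∑ k, σ k)
    (Ω : Finset (Fin m × Fin n)) (hΩ : ∀ p ∈ Ω, Mt p.1 p.2 = M p.1 p.2)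
    (hmin : nuclearNorm Mt ≤ nuclearNorm M) :
    Real.sqrt (∑ i, ∑ j, (M i j - Mt i j) ^ 2) ≤
      2 * Real.sqrt ((r : ℝ) ^ 2 * σ₁ ^ 2 - ∑ p ∈ Ω, (M p.1 p.2) ^ 2) := by
  have hσ₁pos : 0 < σ₁ := by
    obtain ⟨k, hk⟩ := hmem
    exact hk ▸ hσpos k
  have hsplit : ∀ f : Fin m → Fin n → ℝ,
      ∑ i, ∑ j, f i j = ∑ p ∈ Ω, f p.1 p.2 + ∑ p ∈ Ωᶜ, f p.1 p.2 := by
    intro f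
    rw [Finset.sum_add_sum_compl Ω (fun p => f p.1 p.2)]
    exact (Fintype.sum_prod_type (f := fun p : Fin m × Fin n => f p.1 p.2)).symm
  set A := ∑ p ∈ Ωᶜ, (M p.1 p.2) ^ 2 with hAdef
  set B := ∑ p ∈ Ωᶜ, (Mt p.1 p.2) ^ 2 with hBdef
  set C := (r : ℝ) ^ 2 * σ₁ ^ 2 - ∑ p ∈ Ω, (M p.1 p.2) ^ 2 with hCdef
  have hAnn : 0 ≤ A := Finset.sum_nonneg fun p _ => sq_nonneg _
  have hBnn : 0 ≤ B := Finset.sum_nonneg fun p _ => sq_nonneg _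
  -- sum of σ bounds
  have hσsum : ∑ k, σ k ≤ r * σ₁ := by
    calc ∑ k, σ k ≤ ∑ _k : Fin r, σ₁ := Finset.sum_le_sum fun k _ => hσ₁ k
      _ = r * σ₁ := by simp [mul_comm]
  have hσsqsum : ∑ k, (σ k) ^ 2 ≤ r * σ₁ ^ 2 := by
    calc ∑ k, (σ k) ^ 2 ≤ ∑ _k : Fin r, σ₁ ^ 2 := by
          apply Finset.sum_le_sum
          intro k _
          have := hσpos k
          nlinarith [hσ₁ k]
      _ = r * σ₁ ^ 2 := by simp [mul_comm]
  have hrr : (r : ℝ) ≤ (r : ℝ) ^ 2 := by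
    have : r ≤ r ^ 2 := Nat.le_self_pow (by norm_num) r
    exact_mod_cast this
  have hA : A ≤ C := by
    have h1 : ∑ p ∈ Ω, (M p.1 p.2) ^ 2 + A = ∑ k, (σ k) ^ 2 := by
      rw [← hF, hsplit fun i j => (M i j) ^ 2]
    have h2 : (r : ℝ) * σ₁ ^ 2 ≤ (r : ℝ) ^ 2 * σ₁ ^ 2 :=
      mul_le_mul_of_nonneg_right hrr (sq_nonneg _)
    simp only [hCdef]
    nlinarith [hσsqsum]
  have hB : B ≤ C := by
    have h1 : ∑ p ∈ Ω, (Mt p.1 p.2) ^ 2 + B = ∑ i, ∑ j, (Mt i j) ^ 2 := by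
      rw [hsplit fun i j => (Mt i j) ^ 2]
    have hΩeq : ∑ p ∈ Ω, (Mt p.1 p.2) ^ 2 = ∑ p ∈ Ω, (M p.1 p.2) ^ 2 :=
      Finset.sum_congr rfl fun p hp => by rw [hΩ p hp]
    have h2 : ∑ i, ∑ j, (Mt i j) ^ 2 ≤ (nuclearNorm Mt) ^ 2 := frob_le_nuc_sq Mt
    have h3 : (nuclearNorm Mt) ^ 2 ≤ (nuclearNorm M) ^ 2 := by
      have := nuclearNorm_nonneg Mt
      nlinarith
    have h4 : (nuclearNorm M) ^ 2 ≤ (r : ℝ) ^ 2 * σ₁ ^ 2 := by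
      rw [hnuc]
      have hnn : 0 ≤ ∑ k, σ k := Finset.sum_nonneg fun k _ => (hσpos k).le
      calc (∑ k, σ k) ^ 2 ≤ ((r : ℝ) * σ₁) ^ 2 := by nlinarith [hσsum]
        _ = (r : ℝ) ^ 2 * σ₁ ^ 2 := by ring
    simp only [hCdef]
    nlinarith
  have hCnn : 0 ≤ C := le_trans hAnn hA
  -- the difference vanishes on Ω
  have hdiff : ∑ i, ∑ j, (M i j - Mt i j) ^ 2
      = ∑ p ∈ Ωᶜ, (M p.1 p.2 - Mt p.1 p.2) ^ 2 := by
    rw [hsplit fun i j => (M i j - Mt i j) ^ 2]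
    have : ∑ p ∈ Ω, (M p.1 p.2 - Mt p.1 p.2) ^ 2 = 0 :=
      Finset.sum_eq_zero fun p hp => by rw [hΩ p hp]; ring
    rw [this, zero_add]
  -- Cauchy–Schwarz / triangle inequality on Ωᶜ
  have hCS : (∑ p ∈ Ωᶜ, M p.1 p.2 * Mt p.1 p.2) ^ 2 ≤ A * B :=
    Finset.sum_mul_sq_le_sq_mul_sq Ωᶜ (fun p => M p.1 p.2) (fun p => Mt p.1 p.2)
  have habs : -(Real.sqrt A * Real.sqrt B) ≤ ∑ p ∈ Ωᶜ, M p.1 p.2 * Mt p.1 p.2 := by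
    have h1 : |∑ p ∈ Ωᶜ, M p.1 p.2 * Mt p.1 p.2| ≤ Real.sqrt (A * B) := by
      rw [← Real.sqrt_sq_eq_abs]
      exact Real.sqrt_le_sqrt hCS
    rw [← Real.sqrt_mul hAnn]
    linarith [neg_abs_le (∑ p ∈ Ωᶜ, M p.1 p.2 * Mt p.1 p.2)]
  have hexp : ∑ p ∈ Ωᶜ, (M p.1 p.2 - Mt p.1 p.2) ^ 2
      = A + B - 2 * ∑ p ∈ Ωᶜ, M p.1 p.2 * Mt p.1 p.2 := by
    simp only [hAdef, hBdef]
    rw [← Finset.sum_add_distrib, Finset.mul_sum, ← Finset.sum_sub_distrib]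
    exact Finset.sum_congr rfl fun p _ => by ring
  have htri : ∑ p ∈ Ωᶜ, (M p.1 p.2 - Mt p.1 p.2) ^ 2
      ≤ (Real.sqrt A + Real.sqrt B) ^ 2 := by
    have hsA : Real.sqrt A ^ 2 = A := Real.sq_sqrt hAnn
    have hsB : Real.sqrt B ^ 2 = B := Real.sq_sqrt hBnn
    rw [hexp]
    nlinarith [habs]
  calc Real.sqrt (∑ i, ∑ j, (M i j - Mt i j) ^ 2)
      ≤ Real.sqrt ((Real.sqrt A + Real.sqrt B) ^ 2) := by
        rw [hdiff]; exact Real.sqrt_le_sqrt htri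
    _ = Real.sqrt A + Real.sqrt B := by
        rw [Real.sqrt_sq (by positivity)]
    _ ≤ Real.sqrt C + Real.sqrt C :=
        add_le_add (Real.sqrt_le_sqrt hA) (Real.sqrt_le_sqrt hB)
    _ = 2 * Real.sqrt C := by ring
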